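/- arXiv:1609.00814 — 3 statements merged into one kernel-verified Lean document; each statement's English description precedes it below -/
import Mathlib

section
/- (Lemma 2.2, unique optimal positioning) For every z' ∈ M_j there is ε > 0 such that for all z ∈ M_j with ‖z − z'‖ < ε: (i) there is a unique R_{z,z'} ∈ O(m−j) minimizing R ↦ ‖z' − zR‖ over O(m−j), so z R_{z,z'} is the unique point of the orbit of z in optimal position to z'; (ii) if z'^T z is symmetric, then R_{z,z'} = I_{m−j}. -/
open Matrix

/-- Frobenius norm of a real matrix. -/
noncomputable def frobNorm {n k : ℕ} (M : Matrix (Fin n) (Fin k) ℝ) : ℝ :=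
  Real.sqrt (∑ i, ∑ j, (M i j) ^ 2)

/-- The space `M_j` of representatives of `j`-dimensional subspheres of `S^m` for PNS:
matrices `z ∈ ℝ^{(m+2)×(m−j)}` whose top `(m+1)×(m−j)` block `v` has orthonormal columns
and whose bottom row `αᵀ` satisfies `‖α‖ < 1`. -/
def MjPNS (m j : ℕ) : Set (Matrix (Fin (m + 2)) (Fin (m - j)) ℝ) :=
  {z | (∀ a b : Fin (m - j),
          ∑ i : Fin (m + 1), z i.castSucc a * z i.castSucc b = if a = b then (1 : ℝ) else 0) ∧
       ∑ a : Fin (m - j), z (Fin.last (m + 1)) a ^ 2 < 1}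

section Helpers

variable {n : Type*} [Fintype n] [DecidableEq n]

/-- quadratic-form positivity (no symmetry assumed) -/
def PosQ (A : Matrix n n ℝ) : Prop := ∀ x : n → ℝ, x ≠ 0 → 0 < x ⬝ᵥ (A *ᵥ x)

set_option linter.unusedSectionVars false

lemma traceConjId (P M : Matrix n n ℝ) :
    Matrix.trace (Mᵀ * P * M) = ∑ j, (fun i => M i j) ⬝ᵥ (P *ᵥ fun i => M i j) := by
  simp only [Matrix.trace, Matrix.diag_apply, Matrix.mul_apply, Matrix.transpose_apply,
    dotProduct, Matrix.mulVec, Finset.sum_mul, Finset.mul_sum]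
  rw [Finset.sum_congr rfl]
  intro j _
  rw [Finset.sum_comm]
  apply Finset.sum_congr rfl
  intro i _
  apply Finset.sum_congr rfl
  intro k _
  ring

lemma posq_conj_nonneg {P : Matrix n n ℝ} (hP : PosQ P) (M : Matrix n n ℝ) :
    0 ≤ Matrix.trace (Mᵀ * P * M) := by
  rw [traceConjId]
  apply Finset.sum_nonneg
  intro j _
  by_cases h : (fun i => M i j) = 0
  · rw [h]; simp
  · exact le_of_lt (hP _ h)

lemma posq_conj_eq_zero {P : Matrix n n ℝ} (hP : PosQ P) {M : Matrix n n ℝ}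
    (h : Matrix.trace (Mᵀ * P * M) = 0) : M = 0 := by
  rw [traceConjId] at h
  have hz : ∀ j ∈ Finset.univ, (fun i => M i j) ⬝ᵥ (P *ᵥ fun i => M i j) = 0 := by
    apply (Finset.sum_eq_zero_iff_of_nonneg _).mp h
    · intro j _
      by_cases hc : (fun i => M i j) = 0
      · rw [hc]; simp
      · exact le_of_lt (hP _ hc)
  ext i j
  by_contra hij
  have hc : (fun i => M i j) ≠ 0 := by
    intro h0
    exact hij (congrFun h0 i)
  have := hP _ hc
  rw [hz j (Finset.mem_univ j)] at this
  exact lt_irrefl 0 this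

lemma trace_sub_eq {S R : Matrix n n ℝ} (hS : Sᵀ = S) (hR : Rᵀ * R = 1) :
    Matrix.trace ((1 - R)ᵀ * S * (1 - R)) = 2 * (Matrix.trace S - Matrix.trace (S * R)) := by
  have hRR : R * Rᵀ = 1 := mul_eq_one_comm.mp hR
  have h1 : Matrix.trace (Rᵀ * S * R) = Matrix.trace S := by
    rw [Matrix.trace_mul_cycle, hRR, Matrix.one_mul]
  have h2 : Matrix.trace (Rᵀ * S) = Matrix.trace (S * R) := by
    rw [← Matrix.trace_transpose (Rᵀ * S), Matrix.transpose_mul, Matrix.transpose_transpose, hS]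
  rw [Matrix.transpose_sub, Matrix.transpose_one]
  rw [Matrix.sub_mul, Matrix.sub_mul, Matrix.mul_sub, Matrix.mul_sub]
  simp only [Matrix.one_mul, Matrix.mul_one, Matrix.trace_sub]
  rw [h1, h2]
  ring

/-- for symmetric positive `S` and orthogonal `R`, `tr(S R) ≤ tr S`. -/
lemma trace_mul_le {S R : Matrix n n ℝ} (hP : PosQ S) (hS : Sᵀ = S) (hR : Rᵀ * R = 1) :
    Matrix.trace (S * R) ≤ Matrix.trace S := by
  have := posq_conj_nonneg hP (1 - R)
  rw [trace_sub_eq hS hR] at this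
  linarith

lemma trace_mul_eq_iff {S R : Matrix n n ℝ} (hP : PosQ S) (hS : Sᵀ = S) (hR : Rᵀ * R = 1)
    (h : Matrix.trace (S * R) = Matrix.trace S) : R = 1 := by
  have h0 : Matrix.trace ((1 - R)ᵀ * S * (1 - R)) = 0 := by
    rw [trace_sub_eq hS hR, h]; ring
  have := posq_conj_eq_zero hP h0
  have h1 : (1 : Matrix n n ℝ) - R = 0 := this
  exact (sub_eq_zero.mp h1).symm

lemma polar_exists {A : Matrix n n ℝ} (hA : PosQ A) :
    ∃ R₀ : Matrix n n ℝ, R₀ᵀ * R₀ = 1 ∧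
      (∀ R : Matrix n n ℝ, Rᵀ * R = 1 → Matrix.trace (A * R) ≤ Matrix.trace (A * R₀)) ∧
      (∀ R : Matrix n n ℝ, Rᵀ * R = 1 → Matrix.trace (A * R) = Matrix.trace (A * R₀) → R = R₀) := by
  have hstar : ∀ x : n → ℝ, star x = x := fun x => funext fun i => star_trivial _
  have hinj : Function.Injective (A.mulVec) := by
    intro x y hxy
    by_contra hne
    have hd : x - y ≠ 0 := sub_ne_zero.mpr hne
    have h0 : A *ᵥ (x - y) = 0 := by rw [Matrix.mulVec_sub, hxy, sub_self]
    have := hA _ hd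
    rw [h0, dotProduct_zero] at this
    exact lt_irrefl _ this
  have hAU : IsUnit A := Matrix.mulVec_injective_iff_isUnit.mp hinj
  have hAdet : IsUnit A.det := (Matrix.isUnit_iff_isUnit_det A).mp hAU
  have hAinv : A⁻¹ * A = 1 := Matrix.nonsing_inv_mul A hAdet
  have hAinv' : A * A⁻¹ = 1 := Matrix.mul_nonsing_inv A hAdet
  have hAtdet : IsUnit Aᵀ.det := by rwa [Matrix.det_transpose]
  have hB : (A * Aᵀ).PosSemidef := by
    have := Matrix.posSemidef_self_mul_conjTranspose A
    rwa [Matrix.conjTranspose_eq_transpose_of_trivial] at this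
  open scoped MatrixOrder in set S := CFC.sqrt (A * Aᵀ) with hSdef
  open scoped MatrixOrder in have hSps : S.PosSemidef := (CFC.sqrt_nonneg _).posSemidef
  open scoped MatrixOrder in have hSS : S * S = A * Aᵀ := CFC.sqrt_mul_sqrt_self _ hB.nonneg
  have hSsym : Sᵀ = S := by
    have h1 := hSps.1
    rwa [Matrix.IsHermitian, Matrix.conjTranspose_eq_transpose_of_trivial] at h1
  have hBdet : IsUnit (A * Aᵀ).det := by
    rw [Matrix.det_mul]; exact hAdet.mul hAtdet
  have hSdetU : IsUnit S.det := by
    have h : S.det * S.det = (A * Aᵀ).det := by rw [← Matrix.det_mul, hSS]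
    exact isUnit_of_mul_isUnit_left (h ▸ hBdet)
  have hSinv : S⁻¹ * S = 1 := Matrix.nonsing_inv_mul S hSdetU
  have hSinv' : S * S⁻¹ = 1 := Matrix.mul_nonsing_inv S hSdetU
  -- S is positive (strictly)
  have hSq : PosQ S := by
    intro x hx
    have hnn : 0 ≤ x ⬝ᵥ (S *ᵥ x) := by
      have := hSps.dotProduct_mulVec_nonneg x
      rwa [hstar] at this
    rcases hnn.lt_or_eq with h | h
    · exact h
    · exfalso
      have hz : S *ᵥ x = 0 := by
        have := (hSps.dotProduct_mulVec_zero_iff x).mp (by rw [hstar]; exact h.symm)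
        exact this
      have hBx : (A * Aᵀ) *ᵥ x = 0 := by
        rw [← hSS, ← Matrix.mulVec_mulVec, hz, Matrix.mulVec_zero]
      have hAtx : Aᵀ *ᵥ x = 0 := by
        apply hinj
        rw [Matrix.mulVec_mulVec, hBx, Matrix.mulVec_zero]
      have hxA : x ᵥ* A = 0 := by rwa [Matrix.mulVec_transpose] at hAtx
      have := hA x hx
      rw [Matrix.dotProduct_mulVec, hxA, zero_dotProduct] at this
      exact lt_irrefl _ this
  set Q := S⁻¹ * A with hQdef
  have hQt : Qᵀ = Aᵀ * S⁻¹ := by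
    rw [hQdef, Matrix.transpose_mul, Matrix.transpose_nonsing_inv, hSsym]
  have hQorth : Qᵀ * Q = 1 := by
    rw [hQt, hQdef]
    have hinv2 : S⁻¹ * S⁻¹ = Aᵀ⁻¹ * A⁻¹ := by
      rw [← Matrix.mul_inv_rev, ← Matrix.mul_inv_rev, hSS]
    calc Aᵀ * S⁻¹ * (S⁻¹ * A) = Aᵀ * (S⁻¹ * S⁻¹) * A := by
          rw [Matrix.mul_assoc, Matrix.mul_assoc, Matrix.mul_assoc]
      _ = Aᵀ * (Aᵀ⁻¹ * A⁻¹) * A := by rw [hinv2]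
      _ = (Aᵀ * Aᵀ⁻¹) * (A⁻¹ * A) := by
          rw [Matrix.mul_assoc, Matrix.mul_assoc, Matrix.mul_assoc]
      _ = 1 := by rw [Matrix.mul_nonsing_inv Aᵀ hAtdet, hAinv, Matrix.mul_one]
  have hQQt : Q * Qᵀ = 1 := mul_eq_one_comm.mp hQorth
  have hSQ : S * Q = A := by
    rw [hQdef, ← Matrix.mul_assoc, hSinv', Matrix.one_mul]
  have hkey : ∀ R : Matrix n n ℝ, A * R = S * (Q * R) := by
    intro R; rw [← Matrix.mul_assoc, hSQ]
  refine ⟨Qᵀ, ?_, ?_, ?_⟩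
  · rw [Matrix.transpose_transpose]; exact hQQt
  · intro R hR
    have hQR : (Q * R)ᵀ * (Q * R) = 1 := by
      rw [Matrix.transpose_mul, Matrix.mul_assoc, ← Matrix.mul_assoc Qᵀ Q R, hQorth,
        Matrix.one_mul, hR]
    have h1 : Matrix.trace (A * Qᵀ) = Matrix.trace S := by
      rw [hkey, hQQt, Matrix.mul_one]
    rw [hkey, h1]
    exact trace_mul_le hSq hSsym hQR
  · intro R hR hReq
    have hQR : (Q * R)ᵀ * (Q * R) = 1 := by
      rw [Matrix.transpose_mul, Matrix.mul_assoc, ← Matrix.mul_assoc Qᵀ Q R, hQorth,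
        Matrix.one_mul, hR]
    have h1 : Matrix.trace (A * Qᵀ) = Matrix.trace S := by
      rw [hkey, hQQt, Matrix.mul_one]
    rw [hkey, h1] at hReq
    have := trace_mul_eq_iff hSq hSsym hQR hReq
    calc R = (Qᵀ * Q) * R := by rw [hQorth, Matrix.one_mul]
      _ = Qᵀ * (Q * R) := by rw [Matrix.mul_assoc]
      _ = Qᵀ := by rw [this, Matrix.mul_one]

end Helpers

section FrobHelpers

lemma sumSq_eq_trace {p q : ℕ} (M : Matrix (Fin p) (Fin q) ℝ) :
    ∑ i, ∑ a, M i a ^ 2 = Matrix.trace (Mᵀ * M) := by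
  simp only [Matrix.trace, Matrix.diag_apply, Matrix.mul_apply, Matrix.transpose_apply, sq]
  exact Finset.sum_comm

lemma frob_trace {p q : ℕ} (z z' : Matrix (Fin p) (Fin q) ℝ)
    {R : Matrix (Fin q) (Fin q) ℝ} (hR : Rᵀ * R = 1) :
    ∑ i, ∑ a, (z' - z * R) i a ^ 2 =
      ((∑ i, ∑ a, (z' i a) ^ 2) + ∑ i, ∑ a, (z i a) ^ 2)
        - 2 * Matrix.trace (z'ᵀ * z * R) := by
  have hRR : R * Rᵀ = 1 := mul_eq_one_comm.mp hR
  rw [sumSq_eq_trace, sumSq_eq_trace, sumSq_eq_trace]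
  have e1 : (z' - z * R)ᵀ * (z' - z * R)
      = z'ᵀ * z' - z'ᵀ * (z * R) - (z * R)ᵀ * z' + (z * R)ᵀ * (z * R) := by
    rw [Matrix.transpose_sub, Matrix.sub_mul, Matrix.mul_sub, Matrix.mul_sub]
    abel
  rw [e1]
  have h2 : Matrix.trace ((z * R)ᵀ * z') = Matrix.trace (z'ᵀ * (z * R)) := by
    rw [← Matrix.trace_transpose ((z * R)ᵀ * z'), Matrix.transpose_mul,
      Matrix.transpose_transpose]
  have h3 : Matrix.trace ((z * R)ᵀ * (z * R)) = Matrix.trace (zᵀ * z) := by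
    rw [Matrix.trace_mul_comm, Matrix.transpose_mul, Matrix.mul_assoc,
      ← Matrix.mul_assoc R Rᵀ zᵀ, hRR, Matrix.one_mul, Matrix.trace_mul_comm]
  have h4 : z'ᵀ * (z * R) = z'ᵀ * z * R := by rw [Matrix.mul_assoc]
  simp only [Matrix.trace_add, Matrix.trace_sub]
  rw [h2, h3, h4]
  ring

lemma frob_le_iff {p q : ℕ} (z z' : Matrix (Fin p) (Fin q) ℝ)
    {R R' : Matrix (Fin q) (Fin q) ℝ} (hR : Rᵀ * R = 1) (hR' : R'ᵀ * R' = 1) :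
    frobNorm (z' - z * R) ≤ frobNorm (z' - z * R') ↔
      Matrix.trace (z'ᵀ * z * R') ≤ Matrix.trace (z'ᵀ * z * R) := by
  unfold frobNorm
  rw [Real.sqrt_le_sqrt_iff (by positivity)]
  rw [frob_trace z z' hR, frob_trace z z' hR']
  constructor <;> intro h <;> linarith

lemma dot_transfer {p q : ℕ} (M : Matrix (Fin p) (Fin q) ℝ) (N : Matrix (Fin p) (Fin q) ℝ)
    (x : Fin q → ℝ) :
    x ⬝ᵥ ((Mᵀ * N) *ᵥ x) = (M *ᵥ x) ⬝ᵥ (N *ᵥ x) := by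
  rw [← Matrix.mulVec_mulVec, Matrix.dotProduct_mulVec, Matrix.vecMul_transpose]

lemma mulVec_self_le {p q : ℕ} (M : Matrix (Fin p) (Fin q) ℝ) (x : Fin q → ℝ) :
    (M *ᵥ x) ⬝ᵥ (M *ᵥ x) ≤ (∑ i, ∑ a, M i a ^ 2) * (x ⬝ᵥ x) := by
  have hx : x ⬝ᵥ x = ∑ a, x a ^ 2 := by simp [dotProduct, sq]
  rw [hx]
  simp only [dotProduct, Matrix.mulVec, ← sq]
  calc ∑ i, (((fun j => M i j) ⬝ᵥ x)) ^ 2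
      ≤ ∑ i, (∑ a, M i a ^ 2) * ∑ a, x a ^ 2 := by
        apply Finset.sum_le_sum
        intro i _
        exact Finset.sum_mul_sq_le_sq_mul_sq _ _ _
    _ = (∑ i, ∑ a, M i a ^ 2) * ∑ a, x a ^ 2 := by rw [Finset.sum_mul]

lemma cs_dot {p : ℕ} (u v : Fin p → ℝ) : (u ⬝ᵥ v) ^ 2 ≤ (u ⬝ᵥ u) * (v ⬝ᵥ v) := by
  simpa [dotProduct, sq] using Finset.sum_mul_sq_le_sq_mul_sq Finset.univ u v

lemma dot_self_nonneg' {p : ℕ} (u : Fin p → ℝ) : 0 ≤ u ⬝ᵥ u := by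
  apply Finset.sum_nonneg
  intro i _
  exact mul_self_nonneg _

lemma dot_self_pos {p : ℕ} {u : Fin p → ℝ} (hu : u ≠ 0) : 0 < u ⬝ᵥ u := by
  rcases (dot_self_nonneg' u).lt_or_eq with h | h
  · exact h
  · exfalso
    apply hu
    funext i
    have h0 : ∀ i ∈ Finset.univ, u i * u i = 0 := by
      apply (Finset.sum_eq_zero_iff_of_nonneg (fun i _ => mul_self_nonneg (u i))).mp h.symm
    have := h0 i (Finset.mem_univ i)
    exact mul_self_eq_zero.mp this

/-- lower bound for the quadratic form of `z'ᵀ z'` for `z'` with orthonormal top block -/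
lemma quad_lower {m j : ℕ} (z' : Matrix (Fin (m + 2)) (Fin (m - j)) ℝ)
    (hz' : ∀ a b : Fin (m - j),
      ∑ i : Fin (m + 1), z' i.castSucc a * z' i.castSucc b = if a = b then (1 : ℝ) else 0)
    (x : Fin (m - j) → ℝ) :
    x ⬝ᵥ x ≤ x ⬝ᵥ ((z'ᵀ * z') *ᵥ x) := by
  rw [dot_transfer]
  have hd : (z' *ᵥ x) ⬝ᵥ (z' *ᵥ x) = ∑ i : Fin (m + 2), (∑ a, z' i a * x a) ^ 2 := by
    simp [dotProduct, Matrix.mulVec, sq]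
  rw [hd, Fin.sum_univ_castSucc]
  have htop : ∑ i : Fin (m + 1), (∑ a, z' i.castSucc a * x a) ^ 2 = x ⬝ᵥ x := by
    have e1 : ∀ i : Fin (m + 1), (∑ a, z' i.castSucc a * x a) ^ 2
        = ∑ a, ∑ b, (z' i.castSucc a * z' i.castSucc b) * (x a * x b) := by
      intro i
      rw [sq, Finset.sum_mul_sum]
      apply Finset.sum_congr rfl; intro a _
      apply Finset.sum_congr rfl; intro b _
      ring
    calc ∑ i : Fin (m + 1), (∑ a, z' i.castSucc a * x a) ^ 2
        = ∑ i : Fin (m + 1), ∑ a, ∑ b, (z' i.castSucc a * z' i.castSucc b) * (x a * x b) := by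
          exact Finset.sum_congr rfl fun i _ => e1 i
      _ = ∑ a, ∑ b, ∑ i : Fin (m + 1), (z' i.castSucc a * z' i.castSucc b) * (x a * x b) := by
          rw [Finset.sum_comm]
          apply Finset.sum_congr rfl; intro a _
          rw [Finset.sum_comm]
      _ = ∑ a, ∑ b, (∑ i : Fin (m + 1), z' i.castSucc a * z' i.castSucc b) * (x a * x b) := by
          apply Finset.sum_congr rfl; intro a _
          apply Finset.sum_congr rfl; intro b _
          rw [Finset.sum_mul]
      _ = ∑ a, ∑ b, (if a = b then (1:ℝ) else 0) * (x a * x b) := by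
          apply Finset.sum_congr rfl; intro a _
          apply Finset.sum_congr rfl; intro b _
          rw [hz' a b]
      _ = x ⬝ᵥ x := by
          simp [dotProduct, ite_mul, Finset.sum_ite_eq]
  rw [htop]
  nlinarith [sq_nonneg (∑ a, z' (Fin.last (m+1)) a * x a)]

/-- positivity of the quadratic form of `z'ᵀ z` when `z` is close to `z'` -/
lemma posq_of_close {m j : ℕ} (z z' : Matrix (Fin (m + 2)) (Fin (m - j)) ℝ)
    (hz' : ∀ a b : Fin (m - j),
      ∑ i : Fin (m + 1), z' i.castSucc a * z' i.castSucc b = if a = b then (1 : ℝ) else 0)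
    (hsmall : (∑ i, ∑ a, ((z - z') i a) ^ 2) * (∑ i, ∑ a, (z' i a) ^ 2) < 1) :
    PosQ (z'ᵀ * z) := by
  intro x hx
  have hsplit : z'ᵀ * z = z'ᵀ * z' + z'ᵀ * (z - z') := by
    rw [← Matrix.mul_add]
    congr 1
    abel
  rw [hsplit, Matrix.add_mulVec, dotProduct_add]
  set T1 := x ⬝ᵥ ((z'ᵀ * z') *ᵥ x) with hT1
  set T2 := x ⬝ᵥ ((z'ᵀ * (z - z')) *ᵥ x) with hT2
  have hp : 0 < x ⬝ᵥ x := dot_self_pos hx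
  have h1 : x ⬝ᵥ x ≤ T1 := quad_lower z' hz' x
  have h2 : T2 = (z' *ᵥ x) ⬝ᵥ ((z - z') *ᵥ x) := dot_transfer z' (z - z') x
  have hU := mulVec_self_le z' x
  have hV := mulVec_self_le (z - z') x
  have hU0 := dot_self_nonneg' (z' *ᵥ x)
  have hV0 := dot_self_nonneg' ((z - z') *ᵥ x)
  have hcs : T2 ^ 2 ≤ ((z' *ᵥ x) ⬝ᵥ (z' *ᵥ x)) * (((z - z') *ᵥ x) ⬝ᵥ ((z - z') *ᵥ x)) := by
    rw [h2]; exact cs_dot _ _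
  have hs0 : (0:ℝ) ≤ ∑ i, ∑ a, (z' i a) ^ 2 := by positivity
  have hd0 : (0:ℝ) ≤ ∑ i, ∑ a, ((z - z') i a) ^ 2 := by positivity
  have hbound : T2 ^ 2 ≤ ((∑ i, ∑ a, ((z - z') i a) ^ 2) * (∑ i, ∑ a, (z' i a) ^ 2))
      * (x ⬝ᵥ x) ^ 2 := by
    calc T2 ^ 2 ≤ ((z' *ᵥ x) ⬝ᵥ (z' *ᵥ x)) * (((z - z') *ᵥ x) ⬝ᵥ ((z - z') *ᵥ x)) := hcs
      _ ≤ ((∑ i, ∑ a, (z' i a) ^ 2) * (x ⬝ᵥ x))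
          * ((∑ i, ∑ a, ((z - z') i a) ^ 2) * (x ⬝ᵥ x)) := by
            apply mul_le_mul hU hV hV0
            positivity
      _ = ((∑ i, ∑ a, ((z - z') i a) ^ 2) * (∑ i, ∑ a, (z' i a) ^ 2)) * (x ⬝ᵥ x) ^ 2 := by
            ring
  nlinarith [sq_nonneg (T2 + x ⬝ᵥ x), sq_nonneg (x ⬝ᵥ x), mul_pos hp hp]

end FrobHelpers

/-- (Lemma 2.2, unique optimal positioning).  For every `z' ∈ M_j` there is `ε > 0` such
that for all `z ∈ M_j` with `‖z − z'‖ < ε`: (i) there is a unique `R_{z,z'} ∈ O(m−j)`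
minimizing `R ↦ ‖z' − zR‖` over `O(m−j)` (so `z R_{z,z'}` is the unique point of the orbit
of `z` in optimal position to `z'`); (ii) if `z'ᵀ z` is symmetric then `R_{z,z'} = I`. -/
theorem stmt_12 (m j : ℕ) (hm : 1 ≤ m) (hj : j ≤ m - 1)
    (z' : Matrix (Fin (m + 2)) (Fin (m - j)) ℝ) (hz' : z' ∈ MjPNS m j) :
    ∃ ε > (0 : ℝ), ∀ z ∈ MjPNS m j, frobNorm (z - z') < ε →
      (∃! R : Matrix (Fin (m - j)) (Fin (m - j)) ℝ,
        Rᵀ * R = 1 ∧ ∀ R' : Matrix (Fin (m - j)) (Fin (m - j)) ℝ, R'ᵀ * R' = 1 →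
          frobNorm (z' - z * R) ≤ frobNorm (z' - z * R')) ∧
      ((z'ᵀ * z).IsSymm →
        ∀ R : Matrix (Fin (m - j)) (Fin (m - j)) ℝ,
          (Rᵀ * R = 1 ∧ ∀ R' : Matrix (Fin (m - j)) (Fin (m - j)) ℝ, R'ᵀ * R' = 1 →
            frobNorm (z' - z * R) ≤ frobNorm (z' - z * R')) → R = 1) := by
  set s : ℝ := ∑ i, ∑ a, (z' i a) ^ 2 with hs
  have hs0 : 0 ≤ s := by positivity
  set ε : ℝ := (Real.sqrt s + 1)⁻¹ with hε
  have hsqrt0 : 0 ≤ Real.sqrt s := Real.sqrt_nonneg s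
  have hεpos : 0 < ε := by positivity
  refine ⟨ε, hεpos, ?_⟩
  intro z hz hclose
  -- the smallness condition
  have hd0 : (0:ℝ) ≤ ∑ i, ∑ a, ((z - z') i a) ^ 2 := by positivity
  have hdlt : (∑ i, ∑ a, ((z - z') i a) ^ 2) < ε ^ 2 := by
    have h1 : Real.sqrt (∑ i, ∑ a, ((z - z') i a) ^ 2) < ε := hclose
    have h2 := Real.sq_sqrt hd0
    nlinarith [Real.sqrt_nonneg (∑ i, ∑ a, ((z - z') i a) ^ 2)]
  have hsmall : (∑ i, ∑ a, ((z - z') i a) ^ 2) * s < 1 := by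
    have hεs : ε ^ 2 * s < 1 := by
      have hss : Real.sqrt s ^ 2 = s := Real.sq_sqrt hs0
      have hlt : s < (Real.sqrt s + 1) ^ 2 := by nlinarith
      have : ε ^ 2 = ((Real.sqrt s + 1) ^ 2)⁻¹ := by
        rw [hε]; rw [← inv_pow]
      rw [this]
      rw [inv_mul_lt_iff₀ (by positivity)]
      simpa using hlt
    calc (∑ i, ∑ a, ((z - z') i a) ^ 2) * s ≤ ε ^ 2 * s := by
          apply mul_le_mul_of_nonneg_right (le_of_lt hdlt) hs0
      _ < 1 := hεs
  have hPos : PosQ (z'ᵀ * z) := posq_of_close z z' hz'.1 hsmall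
  obtain ⟨R₀, hR₀, hmax, huniq⟩ := polar_exists hPos
  constructor
  · refine ⟨R₀, ⟨hR₀, ?_⟩, ?_⟩
    · intro R' hR'
      exact (frob_le_iff z z' hR₀ hR').mpr (hmax R' hR')
    · rintro R ⟨hRo, hRmin⟩
      apply huniq R hRo
      apply le_antisymm (hmax R hRo)
      exact (frob_le_iff z z' hRo hR₀).mp (hRmin R₀ hR₀)
  · rintro hsym R ⟨hRo, hRmin⟩
    have hAs : (z'ᵀ * z)ᵀ = z'ᵀ * z := hsym
    have h1o : (1 : Matrix (Fin (m - j)) (Fin (m - j)) ℝ)ᵀ * 1 = 1 := by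
      rw [Matrix.transpose_one, Matrix.mul_one]
    have hge : Matrix.trace (z'ᵀ * z * 1) ≤ Matrix.trace (z'ᵀ * z * R) :=
      (frob_le_iff z z' hRo h1o).mp (hRmin 1 h1o)
    rw [Matrix.mul_one] at hge
    have hle : Matrix.trace ((z'ᵀ * z) * R) ≤ Matrix.trace (z'ᵀ * z) :=
      trace_mul_le hPos hAs hRo
    exact trace_mul_eq_iff hPos hAs hRo (le_antisymm hle hge)
end

section
/- (Corollary 2.3, characterization of optimal position) For every z' ∈ M_j there is ε > 0 such that for all z ∈ M_j with ‖z − z'‖ < ε: z is in optimal position to z', i.e. ‖z' − z‖ = min_{R ∈ O(m−j)} ‖z' − zR‖, if and only if z^T z' − z'^T z = 0. -/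
open Matrix

namespace Stmt13Aux

/-- sum of squared entries -/
noncomputable def frobSq {n k : ℕ} (M : Matrix (Fin n) (Fin k) ℝ) : ℝ :=
  ∑ i, ∑ j, (M i j) ^ 2

lemma frobNorm_eq {n k : ℕ} (M : Matrix (Fin n) (Fin k) ℝ) :
    frobNorm M = Real.sqrt (frobSq M) := rfl

lemma frobSq_nonneg {n k : ℕ} (M : Matrix (Fin n) (Fin k) ℝ) : 0 ≤ frobSq M := by
  apply Finset.sum_nonneg; intro i _; apply Finset.sum_nonneg; intro j _; positivity

lemma trace_transpose_mul {n k : ℕ} (M N : Matrix (Fin n) (Fin k) ℝ) :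
    trace (Mᵀ * N) = ∑ i, ∑ j, M i j * N i j := by
  rw [Finset.sum_comm]
  simp [Matrix.trace, Matrix.diag, Matrix.mul_apply, Matrix.transpose_apply]

lemma frobSq_eq_trace {n k : ℕ} (M : Matrix (Fin n) (Fin k) ℝ) :
    frobSq M = trace (Mᵀ * M) := by
  rw [trace_transpose_mul, frobSq]
  simp [sq]

lemma frobSq_expand {n k : ℕ} (z z' : Matrix (Fin n) (Fin k) ℝ)
    (R : Matrix (Fin k) (Fin k) ℝ) (hR : Rᵀ * R = 1) :
    frobSq (z' - z * R)
      = trace (z'ᵀ * z') + trace (zᵀ * z) - 2 * trace (Rᵀ * (zᵀ * z')) := by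
  have hR' : R * Rᵀ = 1 := mul_eq_one_comm.mp hR
  rw [frobSq_eq_trace]
  have h1 : (z' - z * R)ᵀ * (z' - z * R)
      = z'ᵀ * z' - z'ᵀ * (z * R) - (Rᵀ * zᵀ) * z' + (Rᵀ * zᵀ) * (z * R) := by
    rw [transpose_sub, transpose_mul, Matrix.sub_mul, Matrix.mul_sub, Matrix.mul_sub]
    abel
  rw [h1, trace_add, trace_sub, trace_sub]
  have h2 : trace (z'ᵀ * (z * R)) = trace (Rᵀ * (zᵀ * z')) := by
    rw [← trace_transpose (z'ᵀ * (z * R))]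
    congr 1
    rw [transpose_mul, transpose_mul, transpose_transpose, Matrix.mul_assoc]
  have h3 : trace ((Rᵀ * zᵀ) * z') = trace (Rᵀ * (zᵀ * z')) := by
    rw [Matrix.mul_assoc Rᵀ zᵀ z']
  have h4 : trace ((Rᵀ * zᵀ) * (z * R)) = trace (zᵀ * z) := by
    rw [trace_mul_comm]
    have : z * R * (Rᵀ * zᵀ) = z * zᵀ := by
      rw [Matrix.mul_assoc z R, ← Matrix.mul_assoc R, hR', Matrix.one_mul]
    rw [this, trace_mul_comm]
  rw [h2, h3, h4]; ring

open scoped MatrixOrder in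
lemma psd_trace_ineq {k : ℕ} (A R : Matrix (Fin k) (Fin k) ℝ)
    (hA : A.PosSemidef) (hR : Rᵀ * R = 1) : trace (Rᵀ * A) ≤ trace A := by
  have hR' : R * Rᵀ = 1 := mul_eq_one_comm.mp hR
  set B := CFC.sqrt A with hBdef
  have hBB : B * B = A := CFC.sqrt_mul_sqrt_self A hA.nonneg
  have hBt : Bᵀ = B := by
    have h := (CFC.sqrt_nonneg A).posSemidef.1
    rwa [Matrix.IsHermitian, conjTranspose_eq_transpose_of_trivial] at h
  have h1 : trace (Rᵀ * A) = ∑ i, ∑ j, (B * R) i j * B i j := by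
    rw [← trace_transpose_mul, transpose_mul, hBt, Matrix.mul_assoc, hBB]
  have hBRB : frobSq (B * R) = trace A := by
    rw [frobSq_eq_trace, transpose_mul, hBt]
    rw [trace_mul_comm, Matrix.mul_assoc, ← Matrix.mul_assoc R, hR', Matrix.one_mul, hBB]
  have hBsq : frobSq B = trace A := by rw [frobSq_eq_trace, hBt, hBB]
  have htrA : 0 ≤ trace A := hBsq ▸ frobSq_nonneg B
  have h2 : ∑ i, ∑ j, (B * R) i j * B i j
      ≤ Real.sqrt (frobSq (B * R)) * Real.sqrt (frobSq B) := by
    have := Real.sum_mul_le_sqrt_mul_sqrt (Finset.univ : Finset (Fin k × Fin k))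
      (fun p => (B * R) p.1 p.2) (fun p => B p.1 p.2)
    simpa [frobSq, Fintype.sum_prod_type] using this
  calc trace (Rᵀ * A) = ∑ i, ∑ j, (B * R) i j * B i j := h1
    _ ≤ Real.sqrt (frobSq (B * R)) * Real.sqrt (frobSq B) := h2
    _ = trace A := by rw [hBRB, hBsq, Real.mul_self_sqrt htrA]

lemma real_aux (s d : ℝ)
    (h : ∀ t : ℝ, |t| ≤ 1 → (Real.sqrt (1 - t ^ 2) - 1) * s + t * d ≤ 0) : d = 0 := by
  by_contra hd
  have hd0 : 0 < |d| := abs_pos.mpr hd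
  set u : ℝ := min 1 (|d| / (|s| + 1)) / 2 with hu
  have hs1 : 0 < |s| + 1 := by positivity
  have hu0 : 0 < u := by
    apply div_pos _ two_pos
    exact lt_min one_pos (div_pos hd0 hs1)
  have hu1 : u ≤ 1 / 2 := by
    have := min_le_left 1 (|d| / (|s| + 1)); rw [hu]; linarith
  have hkey : u * (|s| + 1) < |d| := by
    have h1 : u ≤ (|d| / (|s| + 1)) / 2 := by
      have := min_le_right 1 (|d| / (|s| + 1)); rw [hu]; linarith
    have h2 : u * (|s| + 1) ≤ |d| / 2 := by
      calc u * (|s| + 1) ≤ ((|d| / (|s| + 1)) / 2) * (|s| + 1) := by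
            exact mul_le_mul_of_nonneg_right h1 hs1.le
        _ = |d| / 2 := by field_simp
    linarith
  set t : ℝ := if 0 < d then u else -u with ht
  have htabs : |t| = u := by
    rw [ht]; split <;> simp [abs_of_pos hu0, abs_of_neg, hu0, neg_neg, abs_neg]
  have htd : t * d = u * |d| := by
    rw [ht]; rcases lt_trichotomy d 0 with h1 | h1 | h1
    · rw [if_neg (by linarith), abs_of_neg h1]; ring
    · exact absurd h1 hd
    · rw [if_pos h1, abs_of_pos h1]
  have ht1 : |t| ≤ 1 := by rw [htabs]; linarith
  have htsq : t ^ 2 = u ^ 2 := by rw [← sq_abs, htabs]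
  set c : ℝ := Real.sqrt (1 - t ^ 2) with hc
  have hu2 : u ^ 2 ≤ 1 := by nlinarith
  have hcge : 1 - u ^ 2 ≤ c := by
    rw [hc, htsq]
    rw [Real.le_sqrt (by nlinarith) (by nlinarith)]
    nlinarith
  have hcle : c ≤ 1 := by
    rw [hc]
    calc Real.sqrt (1 - t ^ 2) ≤ Real.sqrt 1 := Real.sqrt_le_sqrt (by nlinarith [sq_nonneg t])
      _ = 1 := Real.sqrt_one
  have hbound := h t ht1
  rw [← hc] at hbound
  have hss : -|s| ≤ s ∧ s ≤ |s| := abs_le.mp (le_refl |s|)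
  nlinarith [hss.1, hss.2, mul_le_mul_of_nonneg_right hcge (abs_nonneg s)]

lemma stdT {k : ℕ} (i j : Fin k) :
    (single i j (1:ℝ))ᵀ = single j i 1 := by
  ext x y
  simp [Matrix.transpose_apply, Matrix.single, and_comm]

lemma traceE {k : ℕ} (i j : Fin k) (A : Matrix (Fin k) (Fin k) ℝ) :
    trace (single i j (1:ℝ) * A) = A j i := by
  rw [Matrix.trace]
  have : ∑ x, (single i j (1:ℝ) * A).diag x = A j i := by
    rw [Finset.sum_eq_single i]
    · simp [Matrix.diag]
    · intro x _ hx
      simp [Matrix.diag, hx]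
    · intro hx; exact absurd (Finset.mem_univ i) hx
  exact this

lemma symm_of_trace_ineq {k : ℕ} (A : Matrix (Fin k) (Fin k) ℝ)
    (h : ∀ R : Matrix (Fin k) (Fin k) ℝ, Rᵀ * R = 1 → trace (Rᵀ * A) ≤ trace A) :
    Aᵀ = A := by
  ext a b
  rw [Matrix.transpose_apply]
  rcases eq_or_ne a b with hab | hab
  · rw [hab]
  -- plane rotation in the (a,b) plane
  set F : Matrix (Fin k) (Fin k) ℝ := single a a 1 + single b b 1 with hF
  set G : Matrix (Fin k) (Fin k) ℝ := single a b 1 - single b a 1 with hG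
  have hFF : F * F = F := by
    rw [hF]
    simp [add_mul, mul_add, single_mul_single_same,
      hab, hab.symm]
  have hFG : F * G = G := by
    rw [hF, hG]
    simp [add_mul, mul_add, mul_sub, single_mul_single_same,
      hab, hab.symm]
  have hGF : G * F = G := by
    rw [hF, hG]
    simp [add_mul, sub_mul, mul_add, single_mul_single_same,
      hab, hab.symm]
    abel
  have hGG : G * G = -F := by
    rw [hF, hG]
    simp [sub_mul, mul_sub, single_mul_single_same,
      hab, hab.symm]
    abel
  have hFt : Fᵀ = F := by rw [hF, transpose_add, stdT, stdT]
  have hGt : Gᵀ = -G := by rw [hG, transpose_sub, stdT, stdT]; rw [neg_sub]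
  have key : ∀ t : ℝ, |t| ≤ 1 →
      (Real.sqrt (1 - t ^ 2) - 1) * (A a a + A b b) + t * (A a b - A b a) ≤ 0 := by
    intro t ht
    set c : ℝ := Real.sqrt (1 - t ^ 2) with hc
    have h1t : (0:ℝ) ≤ 1 - t ^ 2 := by
      have := sq_abs t
      nlinarith [abs_nonneg t]
    have hc2 : c ^ 2 = 1 - t ^ 2 := Real.sq_sqrt h1t
    set R : Matrix (Fin k) (Fin k) ℝ := 1 + (c - 1) • F + t • G with hR
    have hRt : Rᵀ = 1 + (c - 1) • F - t • G := by
      rw [hR, transpose_add, transpose_add, transpose_one, transpose_smul, transpose_smul,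
        hFt, hGt, smul_neg]
      abel
    have horth : Rᵀ * R = 1 := by
      rw [hRt, hR]
      have expand : (1 + (c - 1) • F - t • G) * (1 + (c - 1) • F + t • G)
          = 1 + (c ^ 2 + t ^ 2 - 1) • F := by
        simp only [add_mul, sub_mul, mul_add, Matrix.one_mul, Matrix.mul_one,
          smul_mul_assoc, mul_smul_comm, hFF, hFG, hGF, hGG, smul_smul, smul_neg]
        match_scalars <;> ring
      rw [expand, hc2]
      simp
    have htrF : trace (F * A) = A a a + A b b := by
      rw [hF, Matrix.add_mul, trace_add, traceE, traceE]
    have htrG : trace (G * A) = A b a - A a b := by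
      rw [hG, Matrix.sub_mul, trace_sub, traceE, traceE]
    have htr : trace (Rᵀ * A) = trace A + (c - 1) * (A a a + A b b) - t * (A b a - A a b) := by
      rw [hRt, Matrix.sub_mul, Matrix.add_mul, Matrix.one_mul,
        smul_mul_assoc, smul_mul_assoc, trace_sub, trace_add, trace_smul, trace_smul,
        htrF, htrG, smul_eq_mul, smul_eq_mul]
    have := h R horth
    rw [htr] at this
    linarith
  have := real_aux (A a a + A b b) (A a b - A b a) key
  linarith

lemma psd_of_near {m j : ℕ} (z z' : Matrix (Fin (m + 2)) (Fin (m - j)) ℝ)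
    (hz' : z' ∈ MjPNS m j) (hnear : frobNorm (z - z') < 1)
    (hsym : (zᵀ * z')ᵀ = zᵀ * z') : (zᵀ * z').PosSemidef := by
  rw [posSemidef_iff_dotProduct_mulVec]
  constructor
  · rw [Matrix.IsHermitian, conjTranspose_eq_transpose_of_trivial]
    exact hsym
  · intro x
    have hst : star x = x := by simp
    rw [hst]
    set u : Fin (m + 2) → ℝ := z' *ᵥ x with hu
    set w : Fin (m + 2) → ℝ := (z - z') *ᵥ x with hw
    have hquad : x ⬝ᵥ ((zᵀ * z') *ᵥ x) = w ⬝ᵥ u + u ⬝ᵥ u := by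
      rw [← Matrix.mulVec_mulVec, Matrix.dotProduct_mulVec, Matrix.vecMul_transpose]
      have hz : z *ᵥ x = w + u := by
        rw [hw, hu, Matrix.sub_mulVec]
        abel
      rw [hz, add_dotProduct]
    rw [hquad]
    set nw : ℝ := Real.sqrt (∑ i, w i ^ 2) with hnw
    set nu : ℝ := Real.sqrt (∑ i, u i ^ 2) with hnu
    set nx : ℝ := Real.sqrt (∑ a, x a ^ 2) with hnx
    have hnw0 : 0 ≤ nw := Real.sqrt_nonneg _
    have hnu0 : 0 ≤ nu := Real.sqrt_nonneg _
    have hnx0 : 0 ≤ nx := Real.sqrt_nonneg _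
    have hfn0 : 0 ≤ frobNorm (z - z') := Real.sqrt_nonneg _
    -- Cauchy–Schwarz : w ⬝ᵥ u ≥ -(nw * nu)
    have hCS : -(nw * nu) ≤ w ⬝ᵥ u := by
      have h := Real.sum_mul_le_sqrt_mul_sqrt (Finset.univ : Finset (Fin (m + 2)))
        (fun i => -(w i)) u
      simp only [neg_mul, Finset.sum_neg_distrib, neg_sq] at h
      rw [← hnw, ← hnu] at h
      have h2 : w ⬝ᵥ u = ∑ i, w i * u i := rfl
      rw [h2]
      linarith
    -- u ⬝ᵥ u = nu ^ 2
    have huu : u ⬝ᵥ u = nu * nu := by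
      have h1 : u ⬝ᵥ u = ∑ i, u i ^ 2 := by simp [dotProduct, sq]
      rw [h1, hnu, Real.mul_self_sqrt (Finset.sum_nonneg fun i _ => sq_nonneg _)]
    -- row-wise Cauchy–Schwarz : nw ≤ frobNorm (z - z') * nx
    have hnwle : nw ≤ frobNorm (z - z') * nx := by
      set M := z - z' with hM
      have hrow : ∀ i, (w i) ^ 2 ≤ (∑ a, M i a ^ 2) * (∑ a, x a ^ 2) := by
        intro i
        have : w i = ∑ a, M i a * x a := by
          rw [hw]; simp [Matrix.mulVec, dotProduct]
        rw [this]
        exact Finset.sum_mul_sq_le_sq_mul_sq Finset.univ _ _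
      have hsum : ∑ i, w i ^ 2 ≤ frobSq M * ∑ a, x a ^ 2 := by
        calc ∑ i, w i ^ 2 ≤ ∑ i, (∑ a, M i a ^ 2) * (∑ a, x a ^ 2) :=
              Finset.sum_le_sum fun i _ => hrow i
          _ = frobSq M * ∑ a, x a ^ 2 := by rw [frobSq, Finset.sum_mul]
      calc nw ≤ Real.sqrt (frobSq M * ∑ a, x a ^ 2) := Real.sqrt_le_sqrt hsum
        _ = frobNorm M * nx := by
            rw [Real.sqrt_mul (frobSq_nonneg M), frobNorm_eq, hnx]
    -- z' has orthonormal top block : nx ≤ nu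
    have hnxle : nx ≤ nu := by
      apply Real.sqrt_le_sqrt
      have hsplit : ∑ i : Fin (m + 2), u i ^ 2
          = ∑ i : Fin (m + 1), u i.castSucc ^ 2 + u (Fin.last (m + 1)) ^ 2 :=
        Fin.sum_univ_castSucc (fun i => u i ^ 2)
      have hmain : ∑ i : Fin (m + 1), u i.castSucc ^ 2 = ∑ a, x a ^ 2 := by
        have expand : ∀ i : Fin (m + 1), u i.castSucc ^ 2
            = ∑ a, ∑ b, (z' i.castSucc a * x a) * (z' i.castSucc b * x b) := by
          intro i
          have h1 : u i.castSucc = ∑ a, z' i.castSucc a * x a := by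
            rw [hu]; simp [Matrix.mulVec, dotProduct]
          rw [h1, sq, Finset.sum_mul_sum]
        rw [Finset.sum_congr rfl fun i _ => expand i, Finset.sum_comm]
        have hswap : ∀ a, ∑ i : Fin (m + 1), ∑ b, (z' i.castSucc a * x a) * (z' i.castSucc b * x b)
            = ∑ b, (x a * x b) * ∑ i : Fin (m + 1), z' i.castSucc a * z' i.castSucc b := by
          intro a
          rw [Finset.sum_comm]
          refine Finset.sum_congr rfl fun b _ => ?_
          rw [Finset.mul_sum]
          refine Finset.sum_congr rfl fun i _ => ?_
          ring
        rw [Finset.sum_congr rfl fun a _ => hswap a]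
        have horth := hz'.1
        calc ∑ a, ∑ b, (x a * x b) * ∑ i : Fin (m + 1), z' i.castSucc a * z' i.castSucc b
            = ∑ a, ∑ b, (x a * x b) * (if a = b then (1:ℝ) else 0) := by
              refine Finset.sum_congr rfl fun a _ => Finset.sum_congr rfl fun b _ => ?_
              rw [horth a b]
          _ = ∑ a, x a ^ 2 := by
              simp [mul_ite, Finset.sum_ite_eq', sq]
      rw [hsplit, hmain]
      nlinarith [sq_nonneg (u (Fin.last (m + 1)))]
    -- assemble
    have k1 : nw * nu ≤ (frobNorm (z - z') * nx) * nu :=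
      mul_le_mul_of_nonneg_right hnwle hnu0
    have k2 : frobNorm (z - z') * nx ≤ nx := by nlinarith
    have k3 : (frobNorm (z - z') * nx) * nu ≤ nx * nu :=
      mul_le_mul_of_nonneg_right k2 hnu0
    have k4 : nx * nu ≤ nu * nu := mul_le_mul_of_nonneg_right hnxle hnu0
    linarith

end Stmt13Aux

open Stmt13Aux in
/-- (Corollary 2.3, characterization of optimal position).  For every `z' ∈ M_j` there is
`ε > 0` such that for all `z ∈ M_j` with `‖z − z'‖ < ε`: `z` is in optimal position to
`z'`, i.e. `‖z' − z‖ = min_{R ∈ O(m−j)} ‖z' − zR‖`, if and only if `zᵀ z' − z'ᵀ z = 0`. -/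
theorem stmt_13 (m j : ℕ) (hm : 1 ≤ m) (hj : j ≤ m - 1)
    (z' : Matrix (Fin (m + 2)) (Fin (m - j)) ℝ) (hz' : z' ∈ MjPNS m j) :
    ∃ ε > (0 : ℝ), ∀ z ∈ MjPNS m j, frobNorm (z - z') < ε →
      ((∀ R : Matrix (Fin (m - j)) (Fin (m - j)) ℝ, Rᵀ * R = 1 →
          frobNorm (z' - z) ≤ frobNorm (z' - z * R)) ↔ zᵀ * z' - z'ᵀ * z = 0) := by
  refine ⟨1, one_pos, fun z hz hnear => ?_⟩
  have hbase : frobSq (z' - z)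
      = trace (z'ᵀ * z') + trace (zᵀ * z) - 2 * trace (zᵀ * z') := by
    have h1 : (1 : Matrix (Fin (m - j)) (Fin (m - j)) ℝ)ᵀ * 1 = 1 := by simp
    have h2 := frobSq_expand z z' 1 h1
    simpa using h2
  have hiff : (∀ R : Matrix (Fin (m - j)) (Fin (m - j)) ℝ, Rᵀ * R = 1 →
      frobNorm (z' - z) ≤ frobNorm (z' - z * R))
      ↔ (∀ R : Matrix (Fin (m - j)) (Fin (m - j)) ℝ, Rᵀ * R = 1 →
        trace (Rᵀ * (zᵀ * z')) ≤ trace (zᵀ * z')) := by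
    constructor
    · intro H R hR
      have h := H R hR
      rw [frobNorm_eq, frobNorm_eq] at h
      have hsq : frobSq (z' - z) ≤ frobSq (z' - z * R) :=
        (Real.sqrt_le_sqrt_iff (frobSq_nonneg _)).mp h
      rw [frobSq_expand z z' R hR, hbase] at hsq
      linarith
    · intro H R hR
      rw [frobNorm_eq, frobNorm_eq]
      apply Real.sqrt_le_sqrt
      rw [frobSq_expand z z' R hR, hbase]
      have := H R hR
      linarith
  have hAt : (zᵀ * z')ᵀ = z'ᵀ * z := by rw [transpose_mul, transpose_transpose]
  constructor
  · intro H
    have hsym := symm_of_trace_ineq (zᵀ * z') (hiff.mp H)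
    rw [← hAt, hsym, sub_self]
  · intro hzero
    have hsym : (zᵀ * z')ᵀ = zᵀ * z' := by
      rw [hAt]; exact (sub_eq_zero.mp hzero).symm
    apply hiff.mpr
    intro R hR
    exact psd_trace_ineq _ R (psd_of_near z z' hz' hnear hsym) hR
end

section
/- (Intrinsic distance to the next nested subsphere, eq. (5)) Let v ∈ O(m−j, m+1), α ∈ ℝ^{m−j} with ‖α‖ < 1, and let ṽ ∈ O(j+1, m+1) be any orthonormal complement of v, i.e. (v, ṽ) ∈ O(m+1). Let v' = (v, v_{m−j+1}) ∈ O(m−j+1, m+1) and α'^T = (α^T, α_{m−j+1}) with ‖α'‖ < 1, and let y be any point of the subsphere determined by (v,α) (so v^T y = α and ‖ṽ^T y‖² = 1 − ‖α‖²) with (I_{m+1} − v'v'^T) y ≠ 0. Define the within-subsphere projection π(y) = v'α' + sqrt(1−‖α'‖²) (I_{m+1} − v'v'^T) y / ‖(I_{m+1} − v'v'^T) y‖ and the blow-up g(x) = ṽ^T x / ‖ṽ^T x‖. Then the intrinsic distance inside the subsphere from y to its projection, ρ = sqrt(1−‖α‖²) · arccos( g(y)^T g(π(y)) ), satisfies ρ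 = sqrt(1−‖α‖²) · arccos( ( y^T v_{m−j+1} α_{m−j+1} + sqrt(1−‖α'‖²) ‖(I_{m+1} − v'v'^T) y‖ ) / (1−‖α‖²) ); in particular the value is independent of the choice of the orthonormal complement ṽ. -/
open Matrix

/-- Euclidean norm of a real vector. -/
noncomputable def vecNorm {n : ℕ} (x : Fin n → ℝ) : ℝ := Real.sqrt (∑ i, x i ^ 2)

/-- The orthogonal projection `π_{v,α}` onto the subsphere `{x ∈ S^m : vᵀ x = α}`:
`π_{v,α}(q) = vα + sqrt(1−‖α‖²) (I − vvᵀ) q / ‖(I − vvᵀ) q‖`. -/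
noncomputable def sphProj {m k : ℕ} (v : Matrix (Fin (m + 1)) (Fin k) ℝ) (α : Fin k → ℝ)
    (q : Fin (m + 1) → ℝ) : Fin (m + 1) → ℝ :=
  v *ᵥ α +
    (Real.sqrt (1 - ∑ a, α a ^ 2) / vecNorm ((1 - v * vᵀ) *ᵥ q)) • ((1 - v * vᵀ) *ᵥ q)

/-- The blow-up map `g(x) = ṽᵀ x / ‖ṽᵀ x‖` of the subsphere determined by `(v,α)` to the
unit sphere `S^j`, for an orthonormal complement `ṽ` of `v`. -/
noncomputable def blowUp {m k : ℕ} (tv : Matrix (Fin (m + 1)) (Fin k) ℝ)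
    (x : Fin (m + 1) → ℝ) : Fin k → ℝ :=
  (vecNorm (tvᵀ *ᵥ x))⁻¹ • (tvᵀ *ᵥ x)

private lemma dot_self_eq_sum_sq {n : ℕ} (x : Fin n → ℝ) : x ⬝ᵥ x = ∑ i, x i ^ 2 := by
  simp [dotProduct, sq]

private lemma transpose_mulVec_dot {p q : ℕ} (M : Matrix (Fin p) (Fin q) ℝ) (x : Fin p → ℝ)
    (z : Fin q → ℝ) : (Mᵀ *ᵥ x) ⬝ᵥ z = x ⬝ᵥ (M *ᵥ z) := by
  rw [Matrix.mulVec_transpose, Matrix.dotProduct_mulVec]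

private lemma mulVec_dot {p q : ℕ} (M : Matrix (Fin p) (Fin q) ℝ) (x : Fin q → ℝ)
    (z : Fin p → ℝ) : (M *ᵥ x) ⬝ᵥ z = x ⬝ᵥ (Mᵀ *ᵥ z) := by
  rw [dotProduct_comm, ← transpose_mulVec_dot, dotProduct_comm]

/-- (Intrinsic distance to the next nested subsphere, eq. (5)).  With `v ∈ O(m−j,m+1)`,
`‖α‖ < 1`, an orthonormal complement `ṽ` of `v`, `v' = (v, v_{m−j+1})`,
`α'ᵀ = (αᵀ, α_{m−j+1})`, `‖α'‖ < 1`, and `y` a point of the subsphere determined by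
`(v,α)` with `(I − v'v'ᵀ) y ≠ 0`, the intrinsic distance inside the subsphere from `y`
to its projection,
`ρ = sqrt(1−‖α‖²) · arccos( g(y)ᵀ g(π(y)) )`, satisfies
`ρ = sqrt(1−‖α‖²) · arccos( (yᵀ v_{m−j+1} α_{m−j+1} + sqrt(1−‖α'‖²) ‖(I − v'v'ᵀ) y‖) / (1−‖α‖²) )`;
in particular it does not depend on the choice of `ṽ`. -/
theorem stmt_15 (m j : ℕ) (hm : 1 ≤ m) (hj : j ≤ m - 1)
    (v : Matrix (Fin (m + 1)) (Fin (m - j)) ℝ)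
    (tv : Matrix (Fin (m + 1)) (Fin (j + 1)) ℝ)
    (hv : vᵀ * v = 1) (htv : tvᵀ * tv = 1) (hvtv : vᵀ * tv = 0)
    (hcompl : v * vᵀ + tv * tvᵀ = 1)
    (v' : Matrix (Fin (m + 1)) (Fin (m - j + 1)) ℝ) (hv' : v'ᵀ * v' = 1)
    (hv'cols : ∀ (i : Fin (m + 1)) (a : Fin (m - j)), v' i a.castSucc = v i a)
    (α : Fin (m - j) → ℝ) (α' : Fin (m - j + 1) → ℝ)
    (hα'entries : ∀ a : Fin (m - j), α' a.castSucc = α a)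
    (hα : ∑ a, α a ^ 2 < 1) (hα' : ∑ a, α' a ^ 2 < 1)
    (y : Fin (m + 1) → ℝ) (hy : ∑ i, y i ^ 2 = 1) (hvy : vᵀ *ᵥ y = α)
    (htvy : ∑ b, (tvᵀ *ᵥ y) b ^ 2 = 1 - ∑ a, α a ^ 2)
    (hPy : (1 - v' * v'ᵀ) *ᵥ y ≠ 0) :
    Real.sqrt (1 - ∑ a, α a ^ 2) *
        Real.arccos (blowUp tv y ⬝ᵥ blowUp tv (sphProj v' α' y)) =
      Real.sqrt (1 - ∑ a, α a ^ 2) *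
        Real.arccos
          (((y ⬝ᵥ fun i => v' i (Fin.last (m - j))) * α' (Fin.last (m - j)) +
              Real.sqrt (1 - ∑ a, α' a ^ 2) * vecNorm ((1 - v' * v'ᵀ) *ᵥ y)) /
            (1 - ∑ a, α a ^ 2)) := by

  have key : blowUp tv y ⬝ᵥ blowUp tv (sphProj v' α' y) =
      ((y ⬝ᵥ fun i => v' i (Fin.last (m - j))) * α' (Fin.last (m - j)) +
          Real.sqrt (1 - ∑ a, α' a ^ 2) * vecNorm ((1 - v' * v'ᵀ) *ᵥ y)) /
        (1 - ∑ a, α a ^ 2) := by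
    simp only [blowUp, sphProj]
    set w : Fin (m + 1) → ℝ := fun i => v' i (Fin.last (m - j)) with hw
    set s : ℝ := y ⬝ᵥ w with hs
    set t : ℝ := α' (Fin.last (m - j)) with ht
    set A : ℝ := ∑ a, α a ^ 2 with hA
    set A' : ℝ := ∑ a, α' a ^ 2 with hA'
    set P : Fin (m + 1) → ℝ := (1 - v' * v'ᵀ) *ᵥ y with hP
    set nP : ℝ := vecNorm P with hnP
    set c : ℝ := Real.sqrt (1 - A') / nP with hc
    -- basic positivity
    have hA1 : (0:ℝ) ≤ 1 - A := le_of_lt (by linarith)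
    have hA'1 : (0:ℝ) ≤ 1 - A' := le_of_lt (by linarith)
    have hnnP : ∀ i ∈ Finset.univ, (0:ℝ) ≤ P i ^ 2 := fun i _ => sq_nonneg _
    have hPsum_pos : 0 < ∑ i, P i ^ 2 := by
      rcases lt_or_eq_of_le (Finset.sum_nonneg hnnP) with h | h
      · exact h
      · exfalso
        apply hPy
        funext i
        have := (Finset.sum_eq_zero_iff_of_nonneg hnnP).1 h.symm i (Finset.mem_univ i)
        exact sq_eq_zero_iff.1 this
    have hnP_pos : 0 < nP := by
      rw [hnP, vecNorm]; exact Real.sqrt_pos.2 hPsum_pos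
    have hnP_sq : nP ^ 2 = ∑ i, P i ^ 2 := by
      rw [hnP, vecNorm, Real.sq_sqrt (le_of_lt hPsum_pos)]
    -- structure of v'ᵀ y
    have hβc : ∀ b : Fin (m - j), (v'ᵀ *ᵥ y) b.castSucc = α b := by
      intro b
      have h1 := congrFun hvy b
      simpa [Matrix.mulVec, dotProduct, hv'cols] using h1
    have hβl : (v'ᵀ *ᵥ y) (Fin.last (m - j)) = s := by
      simp only [hs, hw, Matrix.mulVec, dotProduct, Matrix.transpose_apply]
      exact Finset.sum_congr rfl fun i _ => mul_comm _ _
    -- matrix vᵀ * v'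
    have hM : vᵀ * v' = Matrix.of fun (b : Fin (m - j)) (a : Fin (m - j + 1)) =>
        if b.castSucc = a then (1:ℝ) else 0 := by
      ext b a
      have h1 := congrFun (congrFun hv' b.castSucc) a
      simp only [Matrix.mul_apply, Matrix.transpose_apply, Matrix.one_apply] at h1
      simpa [Matrix.mul_apply, Matrix.transpose_apply, hv'cols] using h1
    have hvV' : ∀ γ : Fin (m - j + 1) → ℝ, vᵀ *ᵥ (v' *ᵥ γ) = fun b => γ b.castSucc := by
      intro γ
      funext b
      rw [Matrix.mulVec_mulVec, hM]
      simp [Matrix.mulVec, dotProduct, ite_mul]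
    -- P = y - v' β
    have hP1 : P = y - v' *ᵥ (v'ᵀ *ᵥ y) := by
      rw [hP, Matrix.sub_mulVec, Matrix.one_mulVec, ← Matrix.mulVec_mulVec]
    have hv'P : v'ᵀ *ᵥ P = 0 := by
      rw [hP, Matrix.mulVec_mulVec, Matrix.mul_sub, Matrix.mul_one, ← Matrix.mul_assoc, hv',
        Matrix.one_mul, sub_self, Matrix.zero_mulVec]
    have hvP : vᵀ *ᵥ P = 0 := by
      rw [hP1, Matrix.mulVec_sub, hvy, hvV']
      funext b
      simp [hβc b]
    -- key dot product reduction through the complement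
    have dot_tv : ∀ a b : Fin (m + 1) → ℝ,
        (tvᵀ *ᵥ a) ⬝ᵥ (tvᵀ *ᵥ b) = a ⬝ᵥ b - (vᵀ *ᵥ a) ⬝ᵥ (vᵀ *ᵥ b) := by
      intro a b
      have h1 : (tvᵀ *ᵥ a) ⬝ᵥ (tvᵀ *ᵥ b) = a ⬝ᵥ ((tv * tvᵀ) *ᵥ b) := by
        rw [transpose_mulVec_dot, Matrix.mulVec_mulVec]
      have h2 : (vᵀ *ᵥ a) ⬝ᵥ (vᵀ *ᵥ b) = a ⬝ᵥ ((v * vᵀ) *ᵥ b) := by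
        rw [transpose_mulVec_dot, Matrix.mulVec_mulVec]
      have h3 : tv * tvᵀ = 1 - v * vᵀ := by
        rw [eq_sub_iff_add_eq]; exact (add_comm _ _).trans hcompl
      rw [h1, h2, h3, Matrix.sub_mulVec, Matrix.one_mulVec, dotProduct_sub]
    -- various scalar identities
    have hαα : α ⬝ᵥ α = A := by rw [dot_self_eq_sum_sq, hA]
    have hα'α' : α' ⬝ᵥ α' = A' := by rw [dot_self_eq_sum_sq, hA']
    have e : ∑ b, α b * α b = A := by
      rw [hA]; exact Finset.sum_congr rfl fun b _ => (sq (α b)).symm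
    have hββ : (v'ᵀ *ᵥ y) ⬝ᵥ (v'ᵀ *ᵥ y) = A + s ^ 2 := by
      rw [dotProduct, Fin.sum_univ_castSucc]
      simp only [hβc, hβl]
      rw [e, sq]
    have hβα' : (v'ᵀ *ᵥ y) ⬝ᵥ α' = A + s * t := by
      rw [dotProduct, Fin.sum_univ_castSucc]
      simp only [hβc, hβl, hα'entries]
      rw [e, ht]
    have hyy : y ⬝ᵥ y = 1 := by rw [dot_self_eq_sum_sq, hy]
    have hyP : y ⬝ᵥ P = 1 - A - s ^ 2 := by
      rw [hP1, dotProduct_sub, hyy, ← transpose_mulVec_dot, hββ]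
      ring
    have hPPdot : P ⬝ᵥ P = 1 - A - s ^ 2 := by
      calc P ⬝ᵥ P = (y - v' *ᵥ (v'ᵀ *ᵥ y)) ⬝ᵥ P := by rw [← hP1]
        _ = y ⬝ᵥ P - (v' *ᵥ (v'ᵀ *ᵥ y)) ⬝ᵥ P := by rw [sub_dotProduct]
        _ = y ⬝ᵥ P - (v'ᵀ *ᵥ y) ⬝ᵥ (v'ᵀ *ᵥ P) := by rw [mulVec_dot]
        _ = 1 - A - s ^ 2 := by rw [hv'P, dotProduct_zero, hyP, sub_zero]
    have hnP2 : nP ^ 2 = 1 - A - s ^ 2 := by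
      rw [hnP_sq, ← dot_self_eq_sum_sq, hPPdot]
    -- the projected point
    set pr : Fin (m + 1) → ℝ := v' *ᵥ α' + c • P with hpr
    have hvpr : vᵀ *ᵥ pr = α := by
      rw [hpr, Matrix.mulVec_add, Matrix.mulVec_smul, hvP, hvV', smul_zero, add_zero]
      funext b
      simp [hα'entries b]
    have hcnP : c * nP ^ 2 = Real.sqrt (1 - A') * nP := by
      rw [hc, sq]
      field_simp
    have hypr : y ⬝ᵥ pr = A + s * t + Real.sqrt (1 - A') * nP := by
      rw [hpr, dotProduct_add, dotProduct_smul, ← transpose_mulVec_dot, hβα',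
        hyP, smul_eq_mul, ← hnP2, hcnP]
    have hu1u2 : (tvᵀ *ᵥ y) ⬝ᵥ (tvᵀ *ᵥ pr) = s * t + Real.sqrt (1 - A') * nP := by
      rw [dot_tv, hvy, hvpr, hαα, hypr]
      ring
    have hprpr : pr ⬝ᵥ pr = 1 := by
      have e1 : (v' *ᵥ α') ⬝ᵥ (v' *ᵥ α') = A' := by
        rw [mulVec_dot, Matrix.mulVec_mulVec, hv', Matrix.one_mulVec, hα'α']
      have e2 : (v' *ᵥ α') ⬝ᵥ P = 0 := by
        rw [mulVec_dot, hv'P, dotProduct_zero]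
      have e3 : P ⬝ᵥ P = nP ^ 2 := by rw [hnP2, hPPdot]
      have e4 : c ^ 2 * nP ^ 2 = 1 - A' := by
        rw [hc, div_pow, div_mul_eq_mul_div, mul_div_assoc,
          div_self (by positivity), mul_one, Real.sq_sqrt hA'1]
      rw [hpr, dotProduct_add, add_dotProduct, add_dotProduct,
        dotProduct_smul, smul_dotProduct, smul_dotProduct,
        dotProduct_smul, e1, e2, e3, dotProduct_comm P (v' *ᵥ α'), e2]
      simp only [smul_eq_mul]
      rw [← mul_assoc, ← sq]
      rw [e4]
      ring
    have hu2u2 : (tvᵀ *ᵥ pr) ⬝ᵥ (tvᵀ *ᵥ pr) = 1 - A := by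
      rw [dot_tv, hvpr, hαα, hprpr]
    -- norms
    have hN1 : vecNorm (tvᵀ *ᵥ y) = Real.sqrt (1 - A) := by
      rw [vecNorm, htvy]
    have hN2 : vecNorm (tvᵀ *ᵥ pr) = Real.sqrt (1 - A) := by
      rw [vecNorm, ← dot_self_eq_sum_sq, hu2u2]
    -- put everything together
    rw [smul_dotProduct, dotProduct_smul, hu1u2, hN1, hN2, smul_eq_mul,
      smul_eq_mul]
    have hss : Real.sqrt (1 - A) * Real.sqrt (1 - A) = 1 - A := Real.mul_self_sqrt hA1
    have hApos : (0:ℝ) < 1 - A := by linarith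
    field_simp
    rw [Real.sq_sqrt hA1]
  rw [key]
end
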